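/- Under the setting of the oracle β-set, define for t ∈ [0,1] and a confidence set Γ the risk L_t(Γ) = P(Y ∉ Γ(X)) + t·E[|Γ(X)|]. Then for every β ∈ (0,K), the oracle β-set Γ*_β minimizes L_{G^{-1}(β)} over all confidence sets: L_{G^{-1}(β)}(Γ*_β) = min_Γ L_{G^{-1}(β)}(Γ). -/

import Mathlib

open MeasureTheory

lemma ncard_cast_eq_sum_ind {K : ℕ} (s : Set (Fin K)) :
    (s.ncard : ℝ) = ∑ k, s.indicator (fun _ => (1:ℝ)) k := by
  classical
  rw [Set.ncard_eq_toFinset_card' s]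
  have h : s.toFinset = Finset.univ.filter (· ∈ s) := by ext k; simp
  rw [h, Finset.card_filter]
  push_cast
  refine Finset.sum_congr rfl fun k _ => ?_
  by_cases hk : k ∈ s <;> simp [hk]

/-- The oracle β-set minimizes the penalized risk
`L_t(Γ) = P(Y ∉ Γ(X)) + t·E[|Γ(X)|]` over all confidence sets, for `t = G⁻¹(β)`. -/
theorem oracle_beta_set_minimizes_penalized_risk
    {Ω 𝒳 : Type*} [MeasurableSpace Ω] [MeasurableSpace 𝒳]
    (μ : Measure Ω) [IsProbabilityMeasure μ]
    (K : ℕ) (hK : 0 < K)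
    (X : Ω → 𝒳) (hX : Measurable X)
    (Y : Ω → Fin K) (hY : Measurable Y)
    (p : Fin K → 𝒳 → ℝ) (hp : ∀ k, Measurable (p k))
    (hp01 : ∀ k x, p k x ∈ Set.Icc (0:ℝ) 1)
    -- p_k(x) = P(Y = k | X = x):
    (hcond : ∀ k (A : Set 𝒳), MeasurableSet A →
      (μ {ω | Y ω = k ∧ X ω ∈ A}).toReal = ∫ ω in X ⁻¹' A, p k (X ω) ∂μ)
    (hcdf : ∀ k, Continuous fun t : ℝ => (μ {ω | p k (X ω) ≤ t}).toReal)
    (G : ℝ → ℝ) (hG : ∀ t, G t = ∑ k, (μ {ω | t < p k (X ω)}).toReal)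
    (β : ℝ) (hβ : β ∈ Set.Ioo 0 (K : ℝ))
    (g : ℝ) (hg : g = sInf {t : ℝ | G t ≤ β})
    (Γstar : 𝒳 → Set (Fin K)) (hΓstar : ∀ x, Γstar x = {k : Fin K | g ≤ p k x})
    (Γ : 𝒳 → Set (Fin K)) (hΓ : ∀ k, MeasurableSet {x | k ∈ Γ x}) :
    (μ {ω | Y ω ∉ Γstar (X ω)}).toReal + g * ∫ ω, (Set.ncard (Γstar (X ω)) : ℝ) ∂μ
      ≤ (μ {ω | Y ω ∉ Γ (X ω)}).toReal + g * ∫ ω, (Set.ncard (Γ (X ω)) : ℝ) ∂μ := by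
  classical
  -- integrability of ω ↦ p k (X ω) - g
  have hpXint : ∀ k, Integrable (fun ω => p k (X ω) - g) μ := by
    intro k
    have hm : Measurable (fun ω => p k (X ω) - g) :=
      ((hp k).comp hX).sub measurable_const
    refine (integrable_const (1 + |g|)).mono' hm.aestronglyMeasurable ?_
    filter_upwards with ω
    have h1 := (hp01 k (X ω)).1
    have h2 := (hp01 k (X ω)).2
    have h3 := le_abs_self g
    have h4 := neg_abs_le g
    rw [Real.norm_eq_abs, abs_le]
    constructor <;> [linarith; linarith]
  -- key identity for any confidence set Δ
  have key : ∀ (Δ : 𝒳 → Set (Fin K)), (∀ k, MeasurableSet {x | k ∈ Δ x}) →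
      (μ {ω | Y ω ∉ Δ (X ω)}).toReal + g * ∫ ω, (Set.ncard (Δ (X ω)) : ℝ) ∂μ
        = 1 - ∑ k, ∫ ω,
            (X ⁻¹' {x | k ∈ Δ x}).indicator (fun ω => p k (X ω) - g) ω ∂μ := by
    intro Δ hΔ
    set A : Fin K → Set 𝒳 := fun k => {x | k ∈ Δ x} with hAdef
    have hA : ∀ k, MeasurableSet (X ⁻¹' A k) := fun k => hX (hΔ k)
    have hunion : {ω | Y ω ∈ Δ (X ω)} = ⋃ k, (Y ⁻¹' {k} ∩ X ⁻¹' A k) := by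
      ext ω
      simp only [Set.mem_iUnion, Set.mem_inter_iff, Set.mem_setOf_eq, Set.mem_preimage,
        Set.mem_singleton_iff, hAdef]
      constructor
      · intro h; exact ⟨Y ω, rfl, h⟩
      · rintro ⟨k, hk, h⟩; rw [hk]; exact h
    have hmeas : ∀ k : Fin K, MeasurableSet (Y ⁻¹' {k} ∩ X ⁻¹' A k) :=
      fun k => (hY (measurableSet_singleton k)).inter (hA k)
    have hdisj : Pairwise (Function.onFun Disjoint fun k => Y ⁻¹' {k} ∩ X ⁻¹' A k) := by
      intro i j hij
      refine Set.disjoint_left.mpr ?_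
      rintro ω ⟨hi, -⟩ ⟨hj, -⟩
      exact hij ((Set.mem_singleton_iff.mp hi).symm.trans (Set.mem_singleton_iff.mp hj))
    have e3 : (μ {ω | Y ω ∉ Δ (X ω)}).toReal
        = 1 - ∑ k, ∫ ω in X ⁻¹' A k, p k (X ω) ∂μ := by
      have hms : MeasurableSet {ω | Y ω ∈ Δ (X ω)} := by
        rw [hunion]; exact MeasurableSet.iUnion hmeas
      have hcompl : μ {ω | Y ω ∉ Δ (X ω)} = 1 - μ {ω | Y ω ∈ Δ (X ω)} := by
        have hset : {ω | Y ω ∉ Δ (X ω)} = {ω | Y ω ∈ Δ (X ω)}ᶜ := by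
          ext ω; simp
        rw [hset, prob_compl_eq_one_sub hms]
      have hsum : (μ {ω | Y ω ∈ Δ (X ω)}).toReal
          = ∑ k, ∫ ω in X ⁻¹' A k, p k (X ω) ∂μ := by
        rw [hunion, measure_iUnion hdisj hmeas, tsum_fintype,
          ENNReal.toReal_sum (fun k _ => measure_ne_top μ _)]
        refine Finset.sum_congr rfl fun k _ => ?_
        have hset : Y ⁻¹' {k} ∩ X ⁻¹' A k = {ω | Y ω = k ∧ X ω ∈ A k} := by
          ext ω; simp [hAdef]
        rw [hset, hcond k (A k) (hΔ k)]
      rw [hcompl, ENNReal.toReal_sub_of_le prob_le_one ENNReal.one_ne_top,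
        ENNReal.toReal_one, hsum]
    have e4 : ∫ ω, (Set.ncard (Δ (X ω)) : ℝ) ∂μ = ∑ k, (μ (X ⁻¹' A k)).toReal := by
      have hpt : ∀ ω, (Set.ncard (Δ (X ω)) : ℝ)
          = ∑ k, (X ⁻¹' A k).indicator (fun _ => (1:ℝ)) ω := by
        intro ω
        rw [ncard_cast_eq_sum_ind]
        refine Finset.sum_congr rfl fun k _ => ?_
        by_cases h : k ∈ Δ (X ω) <;>
          simp [Set.indicator_apply, h, hAdef]
      simp_rw [hpt]
      rw [integral_finset_sum _ (fun k _ => (integrable_const (1:ℝ)).indicator (hA k))]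
      refine Finset.sum_congr rfl fun k _ => ?_
      rw [integral_indicator (hA k)]
      simp
      rfl
    rw [e3, e4, Finset.mul_sum]
    have hthis : ∀ k : Fin K, ∫ ω, (X ⁻¹' A k).indicator (fun ω => p k (X ω) - g) ω ∂μ
        = ∫ ω in X ⁻¹' A k, p k (X ω) ∂μ - g * (μ (X ⁻¹' A k)).toReal := by
      intro k
      have hintp : Integrable (fun ω => p k (X ω)) μ := by
        exact ((hpXint k).add (integrable_const g)).congr
          (Filter.Eventually.of_forall fun ω => by simp only [Pi.add_apply]; ring)
      rw [integral_indicator (hA k),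
        integral_sub hintp.integrableOn (integrable_const g).integrableOn,
        setIntegral_const, smul_eq_mul]
      show _ - (μ (X ⁻¹' A k)).toReal * g = _
      ring
    rw [show (∑ k, ∫ ω, (X ⁻¹' {x | k ∈ Δ x}).indicator (fun ω => p k (X ω) - g) ω ∂μ) = ∑ k, (∫ ω in X ⁻¹' A k, p k (X ω) ∂μ - g * (μ (X ⁻¹' A k)).toReal) from Finset.sum_congr rfl fun k _ => hthis k]
    rw [Finset.sum_sub_distrib]
    ring
  have hΓstarMeas : ∀ k, MeasurableSet {x | k ∈ Γstar x} := by
    intro k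
    have : {x | k ∈ Γstar x} = {x | g ≤ p k x} := by
      ext x; simp [hΓstar]
    rw [this]
    exact measurableSet_le measurable_const (hp k)
  rw [key Γstar hΓstarMeas, key Γ hΓ]
  have hsum : ∑ k, ∫ ω, (X ⁻¹' {x | k ∈ Γ x}).indicator (fun ω => p k (X ω) - g) ω ∂μ
      ≤ ∑ k, ∫ ω, (X ⁻¹' {x | k ∈ Γstar x}).indicator (fun ω => p k (X ω) - g) ω ∂μ := by
    refine Finset.sum_le_sum fun k _ => ?_
    refine integral_mono ((hpXint k).indicator (hX (hΓ k)))
      ((hpXint k).indicator (hX (hΓstarMeas k))) fun ω => ?_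
    by_cases h2 : g ≤ p k (X ω)
    · have hmem : ω ∈ X ⁻¹' {x | k ∈ Γstar x} := by
        simp [hΓstar, h2]
      rw [Set.indicator_of_mem hmem]
      by_cases h1 : ω ∈ X ⁻¹' {x | k ∈ Γ x}
      · rw [Set.indicator_of_mem h1]
      · rw [Set.indicator_of_notMem h1]; linarith
    · have hmem : ω ∉ X ⁻¹' {x | k ∈ Γstar x} := by
        simp [hΓstar, h2]
      rw [Set.indicator_of_notMem hmem]
      by_cases h1 : ω ∈ X ⁻¹' {x | k ∈ Γ x}
      · rw [Set.indicator_of_mem h1]; linarith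
      · rw [Set.indicator_of_notMem h1]
  linarith
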